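/- Let q ≥ 2 and let v, d, m be positive integers with v < m and d ≤ m - v. With the construction of Theorem 4 (f^p_n built from an EBF f on {1,…,m-v} plus linear terms n_α x_{π_α(1)} and b·(Σ_α p_α x_{π_α(m_α)} + Σ_k p_{k+d} x_{m-v+k}) with gcd(b,q)=1), the family {F^0,…,F^{q^{v+d}-1}}, where F^p = {f^p_0,…,f^p_{q^d-1}} consists of length-q^m sequences, forms a (q^{v+d}, q^d, q^m, q^{m-v})-ZCCS. Moreover this ZCCS is optimal: q^{v+d} = q^d · ⌊q^m / q^{m-v}⌋, meeting the bound M ≤ N⌊L/Z⌋ with equality. -/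

import Mathlib

open Finset Complex

/-- The primitive `q`-th root of unity `ξ = e^{2πi/q}`. -/
noncomputable def xiq (q : ℕ) : ℂ := Complex.exp (2 * Real.pi * Complex.I / q)

/-- The complex value `ξ^x` attached to `x ∈ ℤ_q`. -/
noncomputable def ec (q : ℕ) (x : ZMod q) : ℂ := xiq q ^ x.val

/-- The `k`-th `q`-ary digit (1-indexed) of the natural number `i`. -/
def dig (q i k : ℕ) : ℕ := i / q ^ (k - 1) % q

/-- Aperiodic cross-correlation of two length-`len` `ℤ_q`-valued sequences at shift `τ`. -/
noncomputable def Rq (q len : ℕ) (a b : ℕ → ZMod q) (τ : ℤ) : ℂ :=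
  if 0 ≤ τ then ∑ i ∈ Finset.range (len - τ.toNat), ec q (a i - b (i + τ.toNat))
  else ∑ i ∈ Finset.range (len - (-τ).toNat), ec q (a (i + (-τ).toNat) - b i)

/-- The EBF `f^p_n` of Theorem 4, evaluated at the `q`-ary digit vector of `i`. -/
def fpnZ (q m d v b : ℕ) (mα : ℕ → ℕ) (π : ℕ → ℕ → ℕ) (a : ℕ → ℕ → ℕ)
    (h : ℕ → ℕ → ZMod q) (h0 : ZMod q) (p n i : ℕ) : ZMod q :=
  (∑ α ∈ Finset.Icc 1 d, ∑ β ∈ Finset.Icc 1 (mα α - 1),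
      (a α β : ZMod q) * (dig q i (π α β) : ZMod q) * (dig q i (π α (β + 1)) : ZMod q))
  + (∑ l ∈ Finset.Icc 1 (q - 1), ∑ u' ∈ Finset.Icc 1 m,
      h u' l * (dig q i u' : ZMod q) ^ l) + h0
  + (∑ α ∈ Finset.Icc 1 d, (dig q n α : ZMod q) * (dig q i (π α 1) : ZMod q))
  + (b : ZMod q) *
      ((∑ α ∈ Finset.Icc 1 d, (dig q p α : ZMod q) * (dig q i (π α (mα α)) : ZMod q))
        + ∑ k ∈ Finset.Icc 1 v, (dig q p (k + d) : ZMod q) * (dig q i (m - v + k) : ZMod q))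

/-!
Summing over `n` first, the head terms `n_α x_{π_α(1)}` form a complete character sum, which
kills every `i` at which `i` and `i + τ` differ in some chain head and leaves `q^d` times a sum
over the remaining `i`. These remaining terms cancel along lines on which a single digit of `i`
varies and the exponent is affine in that digit with a unit slope. For `τ = 0`, `p ≠ p'` one
varies a digit whose coefficient is `b (p_s - p'_s)`. For `0 < τ < q^(m-v)`, `i` and `i + τ` differ
among their first `m - v` digits; taking the first difference `π_α(β)` along a chain, varying the
digit `x_{π_α(β-1)}` (in both `i` and `i + τ`, which agree there) moves the exponent with slope
`a_{α,β-1} (x_{π_α(β)}(i) - x_{π_α(β)}(i + τ))` and does not change where `i` and `i + τ` differ.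
Negative shifts follow by conjugate symmetry of the correlation.
-/

section RootsOfUnity

variable {q : ℕ} [NeZero q]

lemma ec_eq_stdAddChar (x : ZMod q) : ec q x = ZMod.stdAddChar x := by
  rw [ZMod.stdAddChar_apply, ZMod.toCircle_apply, ec, xiq, ← Complex.exp_nat_mul]
  ring_nf

lemma ec_add (x y : ZMod q) : ec q (x + y) = ec q x * ec q y := by
  simp only [ec_eq_stdAddChar, AddChar.map_add_eq_mul]

lemma ec_zero : ec q 0 = 1 := by
  rw [ec_eq_stdAddChar, AddChar.map_zero_eq_one]

lemma ec_neg (x : ZMod q) : ec q (-x) = starRingEnd ℂ (ec q x) := by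
  rw [ec_eq_stdAddChar, ec_eq_stdAddChar, AddChar.map_neg_eq_inv, ZMod.stdAddChar_apply]
  exact Complex.inv_eq_conj (Circle.norm_coe _)

lemma sum_range_ec_add_mul_eq_zero {c : ZMod q} (hc : c ≠ 0) (w : ZMod q) :
    ∑ y ∈ range q, ec q (w + c * y) = 0 := by
  have hsum : ∑ x : ZMod q, ec q (x * c) = 0 := by
    simp only [ec_eq_stdAddChar, AddChar.sum_mulShift c (ZMod.isPrimitive_stdAddChar q), hc,
      if_false, Nat.cast_zero]
  have hrange : ∑ y ∈ range q, ec q (w + c * y) = ec q w * ∑ x : ZMod q, ec q (x * c) := by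
    rw [mul_sum]
    refine Finset.sum_nbij' (fun y => (y : ZMod q)) ZMod.val (by simp) (by simp [ZMod.val_lt])
      (fun y hy => ZMod.val_cast_of_lt (mem_range.mp hy)) (fun x _ => ZMod.natCast_zmod_val x) ?_
    intro y _
    rw [ec_add, mul_comm c]
  rw [hrange, hsum, mul_zero]

end RootsOfUnity

section Correlation

variable {q : ℕ}

lemma Rq_natCast (len : ℕ) (f g : ℕ → ZMod q) (t : ℕ) :
    Rq q len f g t = ∑ i ∈ range (len - t), ec q (f i - g (i + t)) := by
  simp [Rq]

lemma Rq_neg_natCast [NeZero q] (len : ℕ) (f g : ℕ → ZMod q) (t : ℕ) :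
    Rq q len f g (-t) = starRingEnd ℂ (Rq q len g f t) := by
  rcases Nat.eq_zero_or_pos t with rfl | ht
  · rw [Nat.cast_zero, neg_zero, ← Nat.cast_zero (R := ℤ), Rq_natCast, Rq_natCast, map_sum]
    simp [← ec_neg]
  · rw [Rq, if_neg (by omega), Rq_natCast, map_sum]
    simp [← ec_neg]

lemma Rq_self_zero [NeZero q] (len : ℕ) (f : ℕ → ZMod q) : Rq q len f f 0 = len := by
  simp [Rq, ec_zero]

end Correlation

/-- Replaces the `u`-th digit of `i` by `y`; digits are counted from 1, as in `dig`. -/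
def replaceDigit (q i u y : ℕ) : ℕ := i % q ^ (u - 1) + q ^ (u - 1) * (y + q * (i / q ^ u))

section Digits

variable {q : ℕ}

lemma dig_lt (hq : 0 < q) (i k : ℕ) : dig q i k < q := Nat.mod_lt _ hq

lemma natCast_dig_inj (hq : 0 < q) {i j w w' : ℕ} :
    (dig q i w : ZMod q) = dig q j w' ↔ dig q i w = dig q j w' := by
  rw [ZMod.natCast_eq_natCast_iff' _ _ q, Nat.mod_eq_of_lt (dig_lt hq _ _),
    Nat.mod_eq_of_lt (dig_lt hq _ _)]

lemma mod_pow_eq_of_dig_eq {k x y : ℕ} (hxy : ∀ s ∈ Icc 1 k, dig q x s = dig q y s) :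
    x % q ^ k = y % q ^ k := by
  induction k with
  | zero => simp [Nat.mod_one]
  | succ k ih =>
    have htop := hxy (k + 1) (by simp)
    simp only [dig, Nat.add_sub_cancel] at htop
    rw [Nat.mod_pow_succ, Nat.mod_pow_succ, htop,
      ih fun s hs => hxy s (Icc_subset_Icc_right k.le_succ hs)]

lemma exists_dig_ne {k x y : ℕ} (hx : x < q ^ k) (hy : y < q ^ k) (hne : x ≠ y) :
    ∃ s ∈ Icc 1 k, dig q x s ≠ dig q y s := by
  by_contra! h
  exact hne (by simpa [Nat.mod_eq_of_lt hx, Nat.mod_eq_of_lt hy] using mod_pow_eq_of_dig_eq h)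

lemma dig_mod_pow {s k : ℕ} (hs : s ∈ Icc 1 k) (x : ℕ) : dig q (x % q ^ k) s = dig q x s := by
  have hk : q ^ k = q ^ (s - 1) * q ^ (k - s + 1) := by
    rw [← pow_add]; congr 1; have := mem_Icc.mp hs; omega
  rw [dig, dig, hk, Nat.mod_mul_right_div_self,
    Nat.mod_mod_of_dvd _ (dvd_pow_self q (Nat.succ_ne_zero _))]

variable {i u y : ℕ}

lemma replaceDigit_mod_pow : replaceDigit q i u y % q ^ (u - 1) = i % q ^ (u - 1) := by
  rw [replaceDigit, Nat.add_mul_mod_self_left, Nat.mod_mod]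

lemma replaceDigit_div_pow (hq : 0 < q) (hu : 1 ≤ u) (hy : y < q) :
    replaceDigit q i u y / q ^ u = i / q ^ u := by
  rw [replaceDigit, ← pow_sub_one_mul (by omega : u ≠ 0), ← Nat.div_div_eq_div_mul,
    Nat.add_mul_div_left _ _ (by positivity), Nat.div_eq_of_lt (Nat.mod_lt _ (by positivity)),
    zero_add, Nat.add_mul_div_left _ _ hq, Nat.div_eq_of_lt hy, zero_add]

lemma dig_replaceDigit_self (hq : 0 < q) (hy : y < q) : dig q (replaceDigit q i u y) u = y := by
  rw [dig, replaceDigit, Nat.add_mul_div_left _ _ (by positivity),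
    Nat.div_eq_of_lt (Nat.mod_lt _ (by positivity)), zero_add, Nat.add_mul_mod_self_left,
    Nat.mod_eq_of_lt hy]

lemma dig_replaceDigit_of_ne (hq : 0 < q) (hu : 1 ≤ u) (hy : y < q) {w : ℕ} (hw : 1 ≤ w)
    (hwu : w ≠ u) : dig q (replaceDigit q i u y) w = dig q i w := by
  rcases lt_or_gt_of_ne hwu with hlt | hgt
  · have hw' : w ∈ Icc 1 (u - 1) := mem_Icc.mpr ⟨hw, by omega⟩
    rw [← dig_mod_pow hw', replaceDigit_mod_pow, dig_mod_pow hw']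
  · have hpow : q ^ (w - 1) = q ^ u * q ^ (w - 1 - u) := by rw [← pow_add]; congr 1; omega
    rw [dig, dig, hpow, ← Nat.div_div_eq_div_mul, ← Nat.div_div_eq_div_mul,
      replaceDigit_div_pow hq hu hy]

lemma natCast_dig_replaceDigit (hq : 0 < q) (hu : 1 ≤ u) (hy : y < q) {w : ℕ} (hw : 1 ≤ w) :
    (dig q (replaceDigit q i u y) w : ZMod q) = if w = u then (y : ZMod q) else dig q i w := by
  split_ifs with hwu
  · rw [hwu, dig_replaceDigit_self hq hy]
  · rw [dig_replaceDigit_of_ne hq hu hy hw hwu]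

lemma replaceDigit_add_dig_mul (hu : 1 ≤ u) :
    replaceDigit q i u y + dig q i u * q ^ (u - 1) = i + y * q ^ (u - 1) := by
  have hi := Nat.mod_add_div i (q ^ u)
  rw [← pow_sub_one_mul (by omega : u ≠ 0), mul_assoc, Nat.mod_mul, ← Nat.div_div_eq_div_mul] at hi
  rw [replaceDigit, dig, ← pow_sub_one_mul (by omega : u ≠ 0) q, ← Nat.div_div_eq_div_mul]
  linarith

lemma replaceDigit_dig (hu : 1 ≤ u) : replaceDigit q i u (dig q i u) = i := by
  have := replaceDigit_add_dig_mul (q := q) (i := i) (y := dig q i u) hu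
  omega

lemma replaceDigit_replaceDigit (hq : 0 < q) (hu : 1 ≤ u) (hy : y < q) (y' : ℕ) :
    replaceDigit q (replaceDigit q i u y) u y' = replaceDigit q i u y' := by
  rw [replaceDigit, replaceDigit_mod_pow, replaceDigit_div_pow hq hu hy, replaceDigit]

lemma replaceDigit_add_of_dig_eq (hu : 1 ≤ u) {t : ℕ} (ht : dig q (i + t) u = dig q i u) :
    replaceDigit q (i + t) u y = replaceDigit q i u y + t := by
  have h := replaceDigit_add_dig_mul (q := q) (i := i) (y := y) hu
  have h' := replaceDigit_add_dig_mul (q := q) (i := i + t) (y := y) hu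
  rw [ht] at h'
  omega

lemma replaceDigit_lt (hq : 0 < q) (hu : 1 ≤ u) (hy : y < q) {M : ℕ} (huM : u ≤ M)
    (hi : i < q ^ M) : replaceDigit q i u y < q ^ M := by
  have hsplit : q ^ M = q ^ (u - 1) * (q * q ^ (M - u)) := by
    rw [← pow_succ', ← pow_add]; congr 1; omega
  have hhigh : i / q ^ u < q ^ (M - u) := by
    rw [Nat.div_lt_iff_lt_mul (by positivity), ← pow_add]
    exact hi.trans_le (le_of_eq (by congr 1; omega))
  have hlow := Nat.mod_lt i (show 0 < q ^ (u - 1) by positivity)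
  rw [replaceDigit, hsplit]
  calc i % q ^ (u - 1) + q ^ (u - 1) * (y + q * (i / q ^ u))
      < q ^ (u - 1) * (1 + y + q * (i / q ^ u)) := by nlinarith
    _ ≤ q ^ (u - 1) * (q * q ^ (M - u)) := by gcongr; nlinarith

lemma exists_dig_ne_add {N t : ℕ} (ht0 : 0 < t) (ht : t < q ^ N) :
    ∃ w ∈ Icc 1 N, dig q i w ≠ dig q (i + t) w := by
  by_contra! h
  have hmod : i + t ≡ i + 0 [MOD q ^ N] := by
    rw [add_zero]; exact (mod_pow_eq_of_dig_eq h).symm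
  have hdvd := (Nat.modEq_zero_iff_dvd).mp (Nat.ModEq.add_left_cancel' i hmod)
  exact absurd (Nat.le_of_dvd ht0 hdvd) (not_le.mpr ht)

lemma dig_replaceDigit_add_eq_iff (hq : 0 < q) {t w : ℕ} (hu : 1 ≤ u) (hy : y < q)
    (hw : 1 ≤ w) (hiu : dig q (i + t) u = dig q i u) :
    dig q (replaceDigit q i u y) w = dig q (replaceDigit q i u y + t) w
      ↔ dig q i w = dig q (i + t) w := by
  rw [← replaceDigit_add_of_dig_eq hu hiu]
  by_cases hwu : w = u
  · rw [hwu, dig_replaceDigit_self hq hy, dig_replaceDigit_self hq hy, hiu]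
    simp
  · rw [dig_replaceDigit_of_ne hq hu hy hw hwu, dig_replaceDigit_of_ne hq hu hy hw hwu]

-- Position `0` is excluded because `dig` reads it as position `1`.
def diffPos (q t i w : ℕ) : Prop := 1 ≤ w ∧ dig q i w ≠ dig q (i + t) w

lemma dig_eq_of_not_diffPos {t w : ℕ} (hw : 1 ≤ w) (h : ¬ diffPos q t i w) :
    dig q i w = dig q (i + t) w :=
  not_not.mp fun hne => h ⟨hw, hne⟩

lemma diffPos_replaceDigit (hq : 0 < q) {t : ℕ} (hu : 1 ≤ u) (hy : y < q)
    (hiu : dig q (i + t) u = dig q i u) : diffPos q t (replaceDigit q i u y) = diffPos q t i := by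
  ext w
  exact and_congr_right fun hw => not_congr (dig_replaceDigit_add_eq_iff hq hu hy hw hiu)

end Digits

section DigitLines

variable {q : ℕ}

theorem sum_ec_eq_zero_of_affine_on_digit_lines [NeZero q] (S : Finset ℕ) (U : ℕ → ℕ)
    (g : ℕ → ZMod q) (hU : ∀ i ∈ S, 1 ≤ U i)
    (hS : ∀ i ∈ S, ∀ y < q, replaceDigit q i (U i) y ∈ S ∧ U (replaceDigit q i (U i) y) = U i)
    (hg : ∀ i ∈ S, ∃ c ≠ 0, ∀ y < q,
      g (replaceDigit q i (U i) y) = g (replaceDigit q i (U i) 0) + c * y) :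
    ∑ i ∈ S, ec q (g i) = 0 := by
  classical
  have hq := NeZero.pos q
  set base : ℕ → ℕ := fun i => replaceDigit q i (U i) 0
  rw [← sum_fiberwise_of_maps_to (t := S.image base) (fun i hi => mem_image_of_mem base hi)]
  refine sum_eq_zero fun r hr => ?_
  obtain ⟨i₀, hi₀, rfl⟩ := mem_image.mp hr
  obtain ⟨hrS, hUr⟩ := hS i₀ hi₀ 0 hq
  have hu := hU i₀ hi₀
  have hr0 : replaceDigit q (base i₀) (U i₀) 0 = base i₀ := replaceDigit_replaceDigit hq hu hq 0
  have hfiber : S.filter (fun i => base i = base i₀)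
      = (range q).image (fun y => replaceDigit q (base i₀) (U i₀) y) := by
    ext i
    simp only [mem_filter, mem_image, mem_range]
    constructor
    · rintro ⟨hi, hbase⟩
      have hUi : U i = U i₀ := (hS i hi 0 hq).2.symm.trans ((congrArg U hbase).trans hUr)
      refine ⟨dig q i (U i), dig_lt hq _ _, ?_⟩
      rw [← hbase, ← hUi]
      exact (replaceDigit_replaceDigit hq (hU i hi) hq _).trans (replaceDigit_dig (hU i hi))
    · rintro ⟨y, hy, rfl⟩
      obtain ⟨hmem, hUy⟩ := hS _ hrS y hy
      rw [hUr] at hmem hUy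
      refine ⟨hmem, ?_⟩
      show replaceDigit q _ (U _) 0 = _
      rw [hUy, replaceDigit_replaceDigit hq hu hy, hr0]
  have hinj : Set.InjOn (fun y => replaceDigit q (base i₀) (U i₀) y) (range q) := by
    intro y hy y' hy' h
    simpa only [dig_replaceDigit_self hq (mem_range.mp hy),
      dig_replaceDigit_self hq (mem_range.mp hy')] using congrArg (dig q · (U i₀)) h
  obtain ⟨c, hc, hline⟩ := hg _ hrS
  rw [hUr] at hline
  rw [hfiber, sum_image hinj, ← sum_range_ec_add_mul_eq_zero hc (g (base i₀))]
  refine sum_congr rfl fun y hy => ?_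
  rw [hline y (mem_range.mp hy), hr0]

def digitForm (q : ℕ) (s : Finset ℕ) (pos : ℕ → ℕ) (c : ℕ → ZMod q) (i : ℕ) : ZMod q :=
  ∑ k ∈ s, c k * (dig q i (pos k) : ZMod q)

variable {s : Finset ℕ} {pos : ℕ → ℕ} {c : ℕ → ZMod q} {i u y : ℕ}

lemma digitForm_replaceDigit_of_forall_ne (hq : 0 < q) (hu : 1 ≤ u) (hy : y < q)
    (hpos : ∀ k ∈ s, 1 ≤ pos k) (hne : ∀ k ∈ s, pos k ≠ u) :
    digitForm q s pos c (replaceDigit q i u y) = digitForm q s pos c i :=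
  sum_congr rfl fun k hk => by rw [dig_replaceDigit_of_ne hq hu hy (hpos k hk) (hne k hk)]

lemma digitForm_replaceDigit (hq : 0 < q) (hy : y < q) (hpos : ∀ k ∈ s, 1 ≤ pos k)
    (hinj : Set.InjOn pos s) {k : ℕ} (hk : k ∈ s) :
    digitForm q s pos c (replaceDigit q i (pos k) y)
      = digitForm q s pos c (replaceDigit q i (pos k) 0) + c k * y := by
  rw [← sub_eq_iff_eq_add', digitForm, digitForm, ← sum_sub_distrib, sum_eq_single_of_mem k hk]
  · simp only [natCast_dig_replaceDigit hq (hpos k hk) hy (hpos k hk),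
      natCast_dig_replaceDigit hq (hpos k hk) hq (hpos k hk), if_pos, Nat.cast_zero]
    ring
  · intro j hj hjk
    have hne : pos j ≠ pos k := fun h => hjk (hinj hj hk h)
    simp only [natCast_dig_replaceDigit hq (hpos k hk) hy (hpos j hj),
      natCast_dig_replaceDigit hq (hpos k hk) hq (hpos j hj), if_neg hne, sub_self]

lemma sum_ec_add_digitForm_eq_zero [NeZero q] {e : ℕ} (hpos : ∀ k ∈ s, pos k ∈ Icc 1 e)
    (hinj : Set.InjOn pos s) {k : ℕ} (hk : k ∈ s) (hc : c k ≠ 0) (w : ZMod q) :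
    ∑ i ∈ range (q ^ e), ec q (w + digitForm q s pos c i) = 0 := by
  have hq := NeZero.pos q
  have hpos1 : ∀ j ∈ s, 1 ≤ pos j := fun j hj => (mem_Icc.mp (hpos j hj)).1
  refine sum_ec_eq_zero_of_affine_on_digit_lines _ (fun _ => pos k) _ (fun _ _ => hpos1 k hk)
    (fun i hi y hy => ⟨mem_range.mpr (replaceDigit_lt hq (hpos1 k hk) hy
      (mem_Icc.mp (hpos k hk)).2 (mem_range.mp hi)), rfl⟩) fun i _ => ⟨c k, hc, fun y hy => ?_⟩
  rw [digitForm_replaceDigit hq hy hpos1 hinj hk]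
  ring

lemma sum_ec_add_digitForm_id (q e : ℕ) [NeZero q] (c : ℕ → ZMod q) (w : ZMod q) :
    ∑ n ∈ range (q ^ e), ec q (w + digitForm q (Icc 1 e) id c n)
      = if ∀ α ∈ Icc 1 e, c α = 0 then (q : ℂ) ^ e * ec q w else 0 := by
  split_ifs with hc
  · have hzero : ∀ n, digitForm q (Icc 1 e) id c n = 0 := fun n =>
      sum_eq_zero fun α hα => by rw [hc α hα, zero_mul]
    simp [hzero]
  · push Not at hc
    obtain ⟨α, hα, hcα⟩ := hc
    exact sum_ec_add_digitForm_eq_zero (fun _ h => h) Function.injective_id.injOn hα hcα w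

end DigitLines

structure IsChainPartition (d N : ℕ) (len : ℕ → ℕ) (π : ℕ → ℕ → ℕ) : Prop where
  len_pos : ∀ α ∈ Icc 1 d, 1 ≤ len α
  sum_len : ∑ α ∈ Icc 1 d, len α = N
  mapsTo : ∀ α ∈ Icc 1 d, ∀ β ∈ Icc 1 (len α), π α β ∈ Icc 1 N
  inj : ∀ α ∈ Icc 1 d, ∀ β ∈ Icc 1 (len α), ∀ α' ∈ Icc 1 d, ∀ β' ∈ Icc 1 (len α'),
    π α β = π α' β' → α = α' ∧ β = β'

def IsChainPivot (d : ℕ) (len : ℕ → ℕ) (π : ℕ → ℕ → ℕ) (D : ℕ → Prop) (αβ : ℕ × ℕ) : Prop :=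
  αβ.1 ∈ Icc 1 d ∧ αβ.2 ∈ Icc 2 (len αβ.1) ∧ D (π αβ.1 αβ.2) ∧ ∀ β ∈ Ico 1 αβ.2, ¬ D (π αβ.1 β)

namespace IsChainPartition

variable {d N : ℕ} {len : ℕ → ℕ} {π : ℕ → ℕ → ℕ}

lemma one_le (hP : IsChainPartition d N len π) {α β : ℕ} (hα : α ∈ Icc 1 d)
    (hβ : β ∈ Icc 1 (len α)) : 1 ≤ π α β :=
  (mem_Icc.mp (hP.mapsTo α hα β hβ)).1

lemma le (hP : IsChainPartition d N len π) {α β : ℕ} (hα : α ∈ Icc 1 d)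
    (hβ : β ∈ Icc 1 (len α)) : π α β ≤ N :=
  (mem_Icc.mp (hP.mapsTo α hα β hβ)).2

lemma exists_eq (hP : IsChainPartition d N len π) {w : ℕ} (hw : w ∈ Icc 1 N) :
    ∃ α ∈ Icc 1 d, ∃ β ∈ Icc 1 (len α), π α β = w := by
  have hsurj := surjOn_of_injOn_of_card_le (s := (Icc 1 d).sigma fun α => Icc 1 (len α))
    (t := Icc 1 N) (fun αβ => π αβ.1 αβ.2)
    (fun αβ h => hP.mapsTo _ (mem_sigma.mp h).1 _ (mem_sigma.mp h).2)
    (fun αβ h αβ' h' heq => by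
      obtain ⟨hα, hβ⟩ := hP.inj _ (mem_sigma.mp h).1 _ (mem_sigma.mp h).2 _ (mem_sigma.mp h').1 _
        (mem_sigma.mp h').2 heq
      exact Sigma.ext hα (heq_of_eq hβ))
    (by simp [card_sigma, hP.sum_len])
  obtain ⟨⟨α, β⟩, hαβ, rfl⟩ := hsurj (mem_coe.mpr hw)
  exact ⟨α, (mem_sigma.mp hαβ).1, β, (mem_sigma.mp hαβ).2, rfl⟩

lemma exists_isChainPivot (hP : IsChainPartition d N len π) {D : ℕ → Prop}
    (hD : ∃ w ∈ Icc 1 N, D w) (hhead : ∀ α ∈ Icc 1 d, ¬ D (π α 1)) :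
    ∃ αβ, IsChainPivot d len π D αβ := by
  classical
  obtain ⟨w, hw, hDw⟩ := hD
  obtain ⟨α, hα, β, hβ, rfl⟩ := hP.exists_eq hw
  have hex : ∃ β, β ∈ Icc 1 (len α) ∧ D (π α β) := ⟨β, hβ, hDw⟩
  have hmin := Nat.find_spec hex
  refine ⟨(α, Nat.find hex), hα, mem_Icc.mpr ⟨?_, (mem_Icc.mp hmin.1).2⟩, hmin.2,
    fun β' hβ' hD' => ?_⟩
  · by_contra hlt
    have hone : Nat.find hex = 1 := by have := (mem_Icc.mp hmin.1).1; omega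
    exact hhead α hα (hone ▸ hmin.2)
  · have hβ' := mem_Ico.mp hβ'
    exact Nat.find_min hex hβ'.2
      ⟨mem_Icc.mpr ⟨hβ'.1, hβ'.2.le.trans (mem_Icc.mp hmin.1).2⟩, hD'⟩

end IsChainPartition

lemma IsChainPivot.pred_mem {d : ℕ} {len : ℕ → ℕ} {π : ℕ → ℕ → ℕ} {D : ℕ → Prop} {αβ : ℕ × ℕ}
    (h : IsChainPivot d len π D αβ) : αβ.2 - 1 ∈ Icc 1 (len αβ.1) := by
  have := mem_Icc.mp h.2.1
  exact mem_Icc.mpr ⟨by omega, by omega⟩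

lemma IsChainPivot.not_pred {d : ℕ} {len : ℕ → ℕ} {π : ℕ → ℕ → ℕ} {D : ℕ → Prop} {αβ : ℕ × ℕ}
    (h : IsChainPivot d len π D αβ) : ¬ D (π αβ.1 (αβ.2 - 1)) := by
  have := mem_Icc.mp h.2.1
  exact h.2.2.2 _ (mem_Ico.mpr ⟨by omega, by omega⟩)

lemma sum_Icc_one_add {M : Type*} [AddCommMonoid M] (d v : ℕ) (f : ℕ → M) :
    ∑ s ∈ Icc 1 (d + v), f s = ∑ s ∈ Icc 1 d, f s + ∑ k ∈ Icc 1 v, f (k + d) := by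
  have hshift : ∑ k ∈ Icc 1 v, f (k + d) = ∑ s ∈ Ioc d (d + v), f s := by
    rw [← Icc_add_one_left_eq_Ioc, add_comm d 1, add_comm d v, ← map_add_right_Icc, sum_map]
    rfl
  have hIoc : ∀ n, Icc 1 n = Ioc 0 n := fun n => Icc_add_one_left_eq_Ioc 0 n
  rw [hshift, hIoc, hIoc, sum_Ioc_consecutive f (Nat.zero_le d) (Nat.le_add_right d v)]

lemma ite_mul_ite_sub_sub {R : Type*} [CommRing R] (A y xl xr xl' xr' : R) {P Q : Prop}
    [Decidable P] [Decidable Q] (hPQ : ¬ (P ∧ Q)) (hQ : Q → xl = xl') :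
    (A * (if P then y else xl) * (if Q then y else xr)
        - A * (if P then y else xl') * (if Q then y else xr'))
      - (A * (if P then 0 else xl) * (if Q then 0 else xr)
        - A * (if P then 0 else xl') * (if Q then 0 else xr'))
      = if P then A * (xr - xr') * y else 0 := by
  by_cases hP : P <;> by_cases hQ' : Q
  · exact absurd ⟨hP, hQ'⟩ hPQ
  all_goals simp only [hP, hQ', if_true, if_false]
  · ring
  · rw [hQ hQ']; ring
  · ring

section Construction

variable {q m d v b : ℕ} {mα : ℕ → ℕ} {π : ℕ → ℕ → ℕ} {a : ℕ → ℕ → ℕ} {h : ℕ → ℕ → ZMod q}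

def pathForm (q d : ℕ) (mα : ℕ → ℕ) (π : ℕ → ℕ → ℕ) (a : ℕ → ℕ → ℕ) (i : ℕ) : ZMod q :=
  ∑ α ∈ Icc 1 d, ∑ β ∈ Icc 1 (mα α - 1),
    (a α β : ZMod q) * (dig q i (π α β) : ZMod q) * (dig q i (π α (β + 1)) : ZMod q)

def powerForm (q m : ℕ) (h : ℕ → ℕ → ZMod q) (i : ℕ) : ZMod q :=
  ∑ l ∈ Icc 1 (q - 1), ∑ u ∈ Icc 1 m, h u l * (dig q i u : ZMod q) ^ l

/-- The variable multiplied by the digit `p_s` in `f^p_n`: the tail `x_{π_s(m_s)}` of chain `s`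
for `s ≤ d`, and `x_{m-v+(s-d)}` for `d < s ≤ d + v`. -/
def tailPos (m d v : ℕ) (mα : ℕ → ℕ) (π : ℕ → ℕ → ℕ) (s : ℕ) : ℕ :=
  if s ≤ d then π s (mα s) else m - v + (s - d)

def tailForm (q m d v : ℕ) (mα : ℕ → ℕ) (π : ℕ → ℕ → ℕ) (p i : ℕ) : ZMod q :=
  digitForm q (Icc 1 (d + v)) (tailPos m d v mα π) (fun s => (dig q p s : ZMod q)) i

/-- The part of `f^p_n(i) - f^{p'}_n(j)` that does not depend on `n`. -/
def corrPhase (q m d v b : ℕ) (mα : ℕ → ℕ) (π : ℕ → ℕ → ℕ) (a : ℕ → ℕ → ℕ)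
    (h : ℕ → ℕ → ZMod q) (p p' i j : ℕ) : ZMod q :=
  (pathForm q d mα π a i - pathForm q d mα π a j) + (powerForm q m h i - powerForm q m h j)
    + (b : ZMod q) * (tailForm q m d v mα π p i - tailForm q m d v mα π p' j)

def headAgreeSet (q m d : ℕ) (π : ℕ → ℕ → ℕ) (t : ℕ) : Finset ℕ :=
  {i ∈ range (q ^ m - t) | ∀ α ∈ Icc 1 d, dig q i (π α 1) = dig q (i + t) (π α 1)}

lemma tailForm_eq (p i : ℕ) :
    tailForm q m d v mα π p i
      = (∑ α ∈ Icc 1 d, (dig q p α : ZMod q) * (dig q i (π α (mα α)) : ZMod q))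
        + ∑ k ∈ Icc 1 v, (dig q p (k + d) : ZMod q) * (dig q i (m - v + k) : ZMod q) := by
  rw [tailForm, digitForm, sum_Icc_one_add]
  congr 1
  · exact sum_congr rfl fun α hα => by rw [tailPos, if_pos (mem_Icc.mp hα).2]
  · refine sum_congr rfl fun k hk => ?_
    rw [tailPos, if_neg (by have := (mem_Icc.mp hk).1; omega), Nat.add_sub_cancel]

lemma fpnZ_sub_fpnZ (h0 : ZMod q) (p p' n i j : ℕ) :
    fpnZ q m d v b mα π a h h0 p n i - fpnZ q m d v b mα π a h h0 p' n j
      = corrPhase q m d v b mα π a h p p' i j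
        + digitForm q (Icc 1 d) id
            (fun α => (dig q i (π α 1) : ZMod q) - (dig q j (π α 1) : ZMod q)) n := by
  simp only [fpnZ, corrPhase, pathForm, powerForm, tailForm_eq, digitForm, id, mul_sub, sub_mul,
    sum_sub_distrib]
  simp only [mul_comm (dig q n _ : ZMod q)]
  ring

lemma sum_Rq_fpnZ_natCast [NeZero q] (h0 : ZMod q) (p p' t : ℕ) :
    ∑ n ∈ range (q ^ d),
        Rq q (q ^ m) (fpnZ q m d v b mα π a h h0 p n) (fpnZ q m d v b mα π a h h0 p' n) t
      = (q : ℂ) ^ d * ∑ i ∈ headAgreeSet q m d π t,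
          ec q (corrPhase q m d v b mα π a h p p' i (i + t)) := by
  simp only [Rq_natCast, fpnZ_sub_fpnZ]
  rw [sum_comm, headAgreeSet, sum_filter, mul_sum]
  refine sum_congr rfl fun i _ => ?_
  rw [sum_ec_add_digitForm_id]
  simp only [sub_eq_zero, natCast_dig_inj (NeZero.pos q)]
  split_ifs <;> simp

lemma one_le_tailPos (hP : IsChainPartition d (m - v) mα π) {s : ℕ} (hs : s ∈ Icc 1 (d + v)) :
    1 ≤ tailPos m d v mα π s := by
  have hs' := mem_Icc.mp hs
  unfold tailPos
  split_ifs with hsd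
  · have hs1 : s ∈ Icc 1 d := mem_Icc.mpr ⟨hs'.1, hsd⟩
    exact hP.one_le hs1 (mem_Icc.mpr ⟨hP.len_pos s hs1, le_rfl⟩)
  · omega

lemma tailPos_mem_Icc (hP : IsChainPartition d (m - v) mα π) (hvm : v ≤ m) {s : ℕ}
    (hs : s ∈ Icc 1 (d + v)) : tailPos m d v mα π s ∈ Icc 1 m := by
  refine mem_Icc.mpr ⟨one_le_tailPos hP hs, ?_⟩
  have hs' := mem_Icc.mp hs
  unfold tailPos
  split_ifs with hsd
  · have hs1 : s ∈ Icc 1 d := mem_Icc.mpr ⟨hs'.1, hsd⟩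
    exact (hP.le hs1 (mem_Icc.mpr ⟨hP.len_pos s hs1, le_rfl⟩)).trans (Nat.sub_le m v)
  · omega

lemma injOn_tailPos (hP : IsChainPartition d (m - v) mα π) :
    Set.InjOn (tailPos m d v mα π) (Icc 1 (d + v)) := by
  have htail : ∀ s, 1 ≤ s → s ≤ d → π s (mα s) ∈ Icc 1 (m - v) ∧ mα s ∈ Icc 1 (mα s) :=
    fun s h1 h2 => have hmem := (mem_Icc.mpr ⟨hP.len_pos s (mem_Icc.mpr ⟨h1, h2⟩), le_rfl⟩)
      ⟨hP.mapsTo s (mem_Icc.mpr ⟨h1, h2⟩) _ hmem, hmem⟩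
  intro s hs s' hs' heq
  have hs := mem_Icc.mp hs
  have hs' := mem_Icc.mp hs'
  rcases le_or_gt s d with hsd | hsd <;> rcases le_or_gt s' d with hsd' | hsd' <;>
    simp only [tailPos, hsd, hsd', not_le.mpr, if_true, if_false] at heq
  · exact (hP.inj s (mem_Icc.mpr ⟨hs.1, hsd⟩) _ (htail s hs.1 hsd).2 s'
      (mem_Icc.mpr ⟨hs'.1, hsd'⟩) _ (htail s' hs'.1 hsd').2 heq).1
  · have := mem_Icc.mp (htail s hs.1 hsd).1; omega
  · have := mem_Icc.mp (htail s' hs'.1 hsd').1; omega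
  · omega

lemma tailPos_ne (hP : IsChainPartition d (m - v) mα π) {α β : ℕ} (hα : α ∈ Icc 1 d)
    (hβ : β ∈ Icc 1 (mα α - 1)) {s : ℕ} (hs : s ∈ Icc 1 (d + v)) :
    tailPos m d v mα π s ≠ π α β := by
  have hβ' := mem_Icc.mp hβ
  have hβα : β ∈ Icc 1 (mα α) := mem_Icc.mpr ⟨hβ'.1, by omega⟩
  unfold tailPos
  split_ifs with hsd
  · intro heq
    have hs1 : s ∈ Icc 1 d := mem_Icc.mpr ⟨(mem_Icc.mp hs).1, hsd⟩
    have hlen := (hP.inj s hs1 (mα s) (mem_Icc.mpr ⟨hP.len_pos s hs1, le_rfl⟩) α hα β hβα heq)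
    rw [hlen.1] at hlen
    omega
  · have := hP.le hα hβα; omega

lemma corrPhase_self (p p' i : ℕ) :
    corrPhase q m d v b mα π a h p p' i i
      = digitForm q (Icc 1 (d + v)) (tailPos m d v mα π)
          (fun s => (b : ZMod q) * ((dig q p s : ZMod q) - dig q p' s)) i := by
  simp only [corrPhase, tailForm, digitForm, sub_self, zero_add, mul_sum, ← sum_sub_distrib]
  exact sum_congr rfl fun s _ => by ring

lemma sum_ec_corrPhase_self_eq_zero [NeZero q] (hP : IsChainPartition d (m - v) mα π)
    (hvm : v ≤ m) (hb : b.Coprime q) {p p' : ℕ} (hp : p < q ^ (v + d)) (hp' : p' < q ^ (v + d))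
    (hpp' : p ≠ p') :
    ∑ i ∈ range (q ^ m), ec q (corrPhase q m d v b mα π a h p p' i i) = 0 := by
  obtain ⟨s, hs, hps⟩ := exists_dig_ne hp hp' hpp'
  have hs' : s ∈ Icc 1 (d + v) := by rwa [add_comm d]
  have hcoef : (b : ZMod q) * ((dig q p s : ZMod q) - dig q p' s) ≠ 0 := by
    rw [Ne, ((ZMod.isUnit_iff_coprime b q).mpr hb).mul_right_eq_zero, sub_eq_zero]
    exact fun h => hps ((natCast_dig_inj (NeZero.pos q)).mp h)
  simpa only [corrPhase_self, zero_add] using sum_ec_add_digitForm_eq_zero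
    (c := fun s => (b : ZMod q) * ((dig q p s : ZMod q) - (dig q p' s : ZMod q)))
    (fun s hs => tailPos_mem_Icc hP hvm hs) (injOn_tailPos hP) hs' hcoef 0

lemma tailForm_replaceDigit (hP : IsChainPartition d (m - v) mα π) (hq : 0 < q) {α β y : ℕ}
    (hα : α ∈ Icc 1 d) (hβ : β ∈ Icc 1 (mα α - 1)) (hy : y < q) (p i : ℕ) :
    tailForm q m d v mα π p (replaceDigit q i (π α β) y) = tailForm q m d v mα π p i :=
  digitForm_replaceDigit_of_forall_ne hq
    (hP.one_le hα (Icc_subset_Icc_right (Nat.sub_le _ _) hβ)) hy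
    (fun _ hs => one_le_tailPos hP hs) (fun _ hs => tailPos_ne hP hα hβ hs)

lemma powerForm_replaceDigit_sub (hq : 0 < q) {u y : ℕ} (hu : 1 ≤ u) (hy : y < q) (i j : ℕ) :
    powerForm q m h (replaceDigit q i u y) - powerForm q m h (replaceDigit q j u y)
      = powerForm q m h (replaceDigit q i u 0) - powerForm q m h (replaceDigit q j u 0) := by
  rw [← sub_eq_zero]
  simp only [powerForm, ← sum_sub_distrib]
  refine sum_eq_zero fun l _ => sum_eq_zero fun w hw => ?_
  simp only [natCast_dig_replaceDigit hq hu hy (mem_Icc.mp hw).1,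
    natCast_dig_replaceDigit hq hu hq (mem_Icc.mp hw).1, Nat.cast_zero]
  split_ifs <;> ring

/-- Changing the digit `x_u`, `u = π_α(β-1)`, in both `i` and `j` only moves the quadratic part
through the edge `x_u x_{π_α(β)}`: the edge `x_{π_α(β-2)} x_u` contributes equally to both
since `i` and `j` agree at `π_α(β-2)`. -/
lemma pathForm_replaceDigit_sub {N : ℕ} (hP : IsChainPartition d N mα π) (hq : 0 < q)
    {α β y i j : ℕ} (hα : α ∈ Icc 1 d) (hβ : β ∈ Icc 2 (mα α)) (hy : y < q)
    (hagree : ∀ β' ∈ Ico 1 β, dig q i (π α β') = dig q j (π α β')) :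
    pathForm q d mα π a (replaceDigit q i (π α (β - 1)) y)
        - pathForm q d mα π a (replaceDigit q j (π α (β - 1)) y)
      = pathForm q d mα π a (replaceDigit q i (π α (β - 1)) 0)
          - pathForm q d mα π a (replaceDigit q j (π α (β - 1)) 0)
        + (a α (β - 1) : ZMod q) * ((dig q i (π α β) : ZMod q) - dig q j (π α β)) * y := by
  have hβ' := mem_Icc.mp hβ
  have hβ1 : β - 1 ∈ Icc 1 (mα α) := mem_Icc.mpr ⟨by omega, by omega⟩
  have hu := hP.one_le hα hβ1
  have hedge : ∀ α' ∈ Icc 1 d, ∀ β' ∈ Icc 1 (mα α' - 1),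
      β' ∈ Icc 1 (mα α') ∧ β' + 1 ∈ Icc 1 (mα α') := fun α' _ β' hβ' => by
    have := mem_Icc.mp hβ'
    exact ⟨mem_Icc.mpr ⟨this.1, by omega⟩, mem_Icc.mpr ⟨by omega, by omega⟩⟩
  rw [← sub_eq_iff_eq_add']
  simp only [pathForm, ← sum_sub_distrib]
  trans ∑ α' ∈ Icc 1 d, ∑ β' ∈ Icc 1 (mα α' - 1), if π α' β' = π α (β - 1) then
    (a α' β' : ZMod q) * ((dig q i (π α' (β' + 1)) : ZMod q) - dig q j (π α' (β' + 1))) * y else 0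
  · refine sum_congr rfl fun α' hα' => sum_congr rfl fun β' hβ' => ?_
    obtain ⟨hl, hr⟩ := hedge α' hα' β' hβ'
    simp only [natCast_dig_replaceDigit hq hu hy (hP.one_le hα' hl),
      natCast_dig_replaceDigit hq hu hy (hP.one_le hα' hr),
      natCast_dig_replaceDigit hq hu hq (hP.one_le hα' hl),
      natCast_dig_replaceDigit hq hu hq (hP.one_le hα' hr), Nat.cast_zero]
    refine ite_mul_ite_sub_sub _ _ _ _ _ _ (fun ⟨h1, h2⟩ => ?_) fun h2 => ?_
    · have := (hP.inj α' hα' β' hl α' hα' (β' + 1) hr (h1.trans h2.symm)).2; omega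
    · obtain ⟨rfl, hβ'β⟩ := hP.inj α' hα' (β' + 1) hr α hα (β - 1) hβ1 h2
      rw [hagree β' (mem_Ico.mpr ⟨(mem_Icc.mp hl).1, by omega⟩)]
  rw [sum_eq_single_of_mem α hα, sum_eq_single_of_mem (β - 1) (mem_Icc.mpr ⟨by omega, by omega⟩),
    if_pos rfl, Nat.sub_add_cancel (by omega : 1 ≤ β)]
  · intro β' hβ' hne
    rw [if_neg fun h => hne (hP.inj α hα β' (hedge α hα β' hβ').1 α hα (β - 1) hβ1 h).2]
  · intro α' hα' hne
    refine sum_eq_zero fun β' hβ' => if_neg fun h => hne ?_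
    exact (hP.inj α' hα' β' (hedge α' hα' β' hβ').1 α hα (β - 1) hβ1 h).1

lemma corrPhase_replaceDigit (hP : IsChainPartition d (m - v) mα π) (hq : 0 < q)
    {α β y i j : ℕ} (hα : α ∈ Icc 1 d) (hβ : β ∈ Icc 2 (mα α)) (hy : y < q)
    (hagree : ∀ β' ∈ Ico 1 β, dig q i (π α β') = dig q j (π α β')) (p p' : ℕ) :
    corrPhase q m d v b mα π a h p p' (replaceDigit q i (π α (β - 1)) y)
        (replaceDigit q j (π α (β - 1)) y)
      = corrPhase q m d v b mα π a h p p' (replaceDigit q i (π α (β - 1)) 0)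
          (replaceDigit q j (π α (β - 1)) 0)
        + (a α (β - 1) : ZMod q) * ((dig q i (π α β) : ZMod q) - dig q j (π α β)) * y := by
  have hβ' := mem_Icc.mp hβ
  have hβ1 : β - 1 ∈ Icc 1 (mα α - 1) := mem_Icc.mpr ⟨by omega, by omega⟩
  have hu : 1 ≤ π α (β - 1) := hP.one_le hα (Icc_subset_Icc_right (Nat.sub_le _ _) hβ1)
  simp only [corrPhase, tailForm_replaceDigit hP hq hα hβ1 hy,
    tailForm_replaceDigit hP hq hα hβ1 hq]
  rw [pathForm_replaceDigit_sub hP hq hα hβ hy hagree, powerForm_replaceDigit_sub hq hu hy]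
  ring

lemma exists_isChainPivot_diffPos (hP : IsChainPartition d (m - v) mα π) {t i : ℕ} (ht0 : 0 < t)
    (ht : t < q ^ (m - v)) (hi : i ∈ headAgreeSet q m d π t) :
    ∃ αβ, IsChainPivot d mα π (diffPos q t i) αβ := by
  obtain ⟨w, hw, hne⟩ := exists_dig_ne_add (i := i) ht0 ht
  exact hP.exists_isChainPivot ⟨w, hw, (mem_Icc.mp hw).1, hne⟩
    fun α hα hD => hD.2 ((mem_filter.mp hi).2 α hα)

lemma replaceDigit_mem_headAgreeSet {N : ℕ} (hP : IsChainPartition d N mα π) (hq : 0 < q)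
    {t i u y : ℕ} (hu : 1 ≤ u) (hum : u ≤ m)
    (hy : y < q) (hiu : dig q (i + t) u = dig q i u) (hi : i ∈ headAgreeSet q m d π t) :
    replaceDigit q i u y ∈ headAgreeSet q m d π t := by
  obtain ⟨hrange, hhead⟩ := mem_filter.mp hi
  refine mem_filter.mpr ⟨mem_range.mpr ?_, fun α hα => ?_⟩
  · have hlt := replaceDigit_lt hq hu hy hum
      (show i + t < q ^ m by have := mem_range.mp hrange; omega)
    rw [replaceDigit_add_of_dig_eq hu hiu] at hlt
    omega
  · have hα1 := hP.one_le hα (mem_Icc.mpr ⟨le_rfl, hP.len_pos α hα⟩)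
    exact (dig_replaceDigit_add_eq_iff hq hu hy hα1 hiu).mpr (hhead α hα)

lemma sum_ec_corrPhase_shift_eq_zero [NeZero q] (hP : IsChainPartition d (m - v) mα π)
    (hacop : ∀ α ∈ Icc 1 d, ∀ β ∈ Icc 1 (mα α - 1), Nat.Coprime (a α β) q)
    {t : ℕ} (ht0 : 0 < t) (ht : t < q ^ (m - v)) (p p' : ℕ) :
    ∑ i ∈ headAgreeSet q m d π t, ec q (corrPhase q m d v b mα π a h p p' i (i + t)) = 0 := by
  have hq := NeZero.pos q
  let piv : ℕ → ℕ × ℕ := fun i => Classical.epsilon (IsChainPivot d mα π (diffPos q t i))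
  let U : ℕ → ℕ := fun i => π (piv i).1 ((piv i).2 - 1)
  have hpiv : ∀ i ∈ headAgreeSet q m d π t, IsChainPivot d mα π (diffPos q t i) (piv i) :=
    fun i hi => Classical.epsilon_spec (exists_isChainPivot_diffPos hP ht0 ht hi)
  have hU : ∀ i ∈ headAgreeSet q m d π t,
      1 ≤ U i ∧ U i ≤ m ∧ dig q (i + t) (U i) = dig q i (U i) := fun i hi => by
    have hα := (hpiv i hi).1
    have hU1 := hP.one_le hα (hpiv i hi).pred_mem
    exact ⟨hU1, (hP.le hα (hpiv i hi).pred_mem).trans (Nat.sub_le _ _),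
      (dig_eq_of_not_diffPos hU1 (hpiv i hi).not_pred).symm⟩
  have hline : ∀ i ∈ headAgreeSet q m d π t, ∀ y < q,
      replaceDigit q i (U i) y ∈ headAgreeSet q m d π t ∧ U (replaceDigit q i (U i) y) = U i :=
    fun i hi y hy => ⟨replaceDigit_mem_headAgreeSet hP hq (hU i hi).1 (hU i hi).2.1 hy
      (hU i hi).2.2 hi, by simp only [U, piv, diffPos_replaceDigit hq (hU i hi).1 hy (hU i hi).2.2]⟩
  refine sum_ec_eq_zero_of_affine_on_digit_lines _ U
    (fun i => corrPhase q m d v b mα π a h p p' i (i + t)) (fun i hi => (hU i hi).1) hline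
    fun i hi => ?_
  obtain ⟨hα, hβ, hDβ, hmin⟩ := hpiv i hi
  refine ⟨(a (piv i).1 ((piv i).2 - 1) : ZMod q) * ((dig q i (π (piv i).1 (piv i).2) : ZMod q)
    - dig q (i + t) (π (piv i).1 (piv i).2)), ?_, fun y hy => ?_⟩
  · have hβ' := mem_Icc.mp hβ
    have hunit := (ZMod.isUnit_iff_coprime _ q).mpr
      (hacop _ hα ((piv i).2 - 1) (mem_Icc.mpr ⟨by omega, by omega⟩))
    rw [Ne, hunit.mul_right_eq_zero, sub_eq_zero, natCast_dig_inj hq]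
    exact hDβ.2
  · have hagree : ∀ β' ∈ Ico 1 (piv i).2,
        dig q i (π (piv i).1 β') = dig q (i + t) (π (piv i).1 β') := fun β' hβ' =>
      dig_eq_of_not_diffPos (hP.one_le hα (mem_Icc.mpr ⟨(mem_Ico.mp hβ').1,
        (mem_Ico.mp hβ').2.le.trans (mem_Icc.mp hβ).2⟩)) (hmin β' hβ')
    show corrPhase q m d v b mα π a h p p' (replaceDigit q i (U i) y)
        (replaceDigit q i (U i) y + t) = corrPhase q m d v b mα π a h p p'
        (replaceDigit q i (U i) 0) (replaceDigit q i (U i) 0 + t) + _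
    rw [← replaceDigit_add_of_dig_eq (hU i hi).1 (hU i hi).2.2,
      ← replaceDigit_add_of_dig_eq (hU i hi).1 (hU i hi).2.2]
    exact corrPhase_replaceDigit hP hq hα hβ hy hagree p p'

lemma sum_Rq_fpnZ_natCast_eq_zero [NeZero q] (hP : IsChainPartition d (m - v) mα π)
    (hvm : v ≤ m) (hacop : ∀ α ∈ Icc 1 d, ∀ β ∈ Icc 1 (mα α - 1), Nat.Coprime (a α β) q)
    (hb : b.Coprime q) (h0 : ZMod q) {p p' t : ℕ} (hp : p < q ^ (v + d)) (hp' : p' < q ^ (v + d))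
    (ht : t < q ^ (m - v)) (hne : t ≠ 0 ∨ p ≠ p') :
    ∑ n ∈ range (q ^ d),
      Rq q (q ^ m) (fpnZ q m d v b mα π a h h0 p n) (fpnZ q m d v b mα π a h h0 p' n) t = 0 := by
  rw [sum_Rq_fpnZ_natCast]
  rcases Nat.eq_zero_or_pos t with rfl | ht0
  · rw [headAgreeSet, filter_true_of_mem fun i _ α _ => rfl, Nat.sub_zero]
    simp only [add_zero]
    rw [sum_ec_corrPhase_self_eq_zero hP hvm hb hp hp' (hne.resolve_left (not_not.mpr rfl)),
      mul_zero]
  · rw [sum_ec_corrPhase_shift_eq_zero hP hacop ht0 ht, mul_zero]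

lemma sum_Rq_fpnZ_eq_zero [NeZero q] (hP : IsChainPartition d (m - v) mα π)
    (hvm : v ≤ m) (hacop : ∀ α ∈ Icc 1 d, ∀ β ∈ Icc 1 (mα α - 1), Nat.Coprime (a α β) q)
    (hb : b.Coprime q) (h0 : ZMod q) {p p' : ℕ} (hp : p < q ^ (v + d)) (hp' : p' < q ^ (v + d))
    {τ : ℤ} (hτ : |τ| < (q : ℤ) ^ (m - v)) (hne : τ ≠ 0 ∨ p ≠ p') :
    ∑ n ∈ range (q ^ d),
      Rq q (q ^ m) (fpnZ q m d v b mα π a h h0 p n) (fpnZ q m d v b mα π a h h0 p' n) τ = 0 := by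
  obtain ⟨t, rfl | rfl⟩ := Int.eq_nat_or_neg τ
  · refine sum_Rq_fpnZ_natCast_eq_zero hP hvm hacop hb h0 hp hp' ?_ (by simpa using hne)
    exact_mod_cast (abs_of_nonneg (Int.natCast_nonneg t)).symm.trans_lt hτ
  · simp only [Rq_neg_natCast]
    rw [← map_sum, sum_Rq_fpnZ_natCast_eq_zero hP hvm hacop hb h0 hp' hp ?_ ?_, map_zero]
    · exact_mod_cast (by simpa using hτ : (t : ℤ) < (q : ℤ) ^ (m - v))
    · simpa [eq_comm] using hne

end Construction

theorem stmt11_general (q m d v b : ℕ) (hq : 2 ≤ q) (hvm : v < m)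
    (mα : ℕ → ℕ) (hmα : ∀ α ∈ Finset.Icc 1 d, 1 ≤ mα α)
    (hsum : ∑ α ∈ Finset.Icc 1 d, mα α = m - v)
    (π : ℕ → ℕ → ℕ)
    (hrange : ∀ α ∈ Finset.Icc 1 d, ∀ β ∈ Finset.Icc 1 (mα α), π α β ∈ Finset.Icc 1 (m - v))
    (hinj : ∀ α ∈ Finset.Icc 1 d, ∀ β ∈ Finset.Icc 1 (mα α), ∀ α' ∈ Finset.Icc 1 d,
      ∀ β' ∈ Finset.Icc 1 (mα α'), π α β = π α' β' → α = α' ∧ β = β')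
    (a : ℕ → ℕ → ℕ)
    (hacop : ∀ α ∈ Finset.Icc 1 d, ∀ β ∈ Finset.Icc 1 (mα α - 1), Nat.Coprime (a α β) q)
    (hbcop : Nat.Coprime b q)
    (h : ℕ → ℕ → ZMod q) (h0 : ZMod q) :
    (∀ p < q ^ (v + d),
      ∑ n ∈ Finset.range (q ^ d),
        Rq q (q ^ m) (fpnZ q m d v b mα π a h h0 p n) (fpnZ q m d v b mα π a h h0 p n) 0
        = (q : ℂ) ^ d * (q : ℂ) ^ m) ∧
    (∀ p < q ^ (v + d), ∀ τ : ℤ, 0 < |τ| → |τ| < (q : ℤ) ^ (m - v) →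
      ∑ n ∈ Finset.range (q ^ d),
        Rq q (q ^ m) (fpnZ q m d v b mα π a h h0 p n) (fpnZ q m d v b mα π a h h0 p n) τ
        = 0) ∧
    (∀ p < q ^ (v + d), ∀ p' < q ^ (v + d), p ≠ p' → ∀ τ : ℤ, |τ| < (q : ℤ) ^ (m - v) →
      ∑ n ∈ Finset.range (q ^ d),
        Rq q (q ^ m) (fpnZ q m d v b mα π a h h0 p n) (fpnZ q m d v b mα π a h h0 p' n) τ
        = 0) ∧
    q ^ (v + d) = q ^ d * (q ^ m / q ^ (m - v)) := by
  have : NeZero q := ⟨by omega⟩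
  have hP : IsChainPartition d (m - v) mα π := ⟨hmα, hsum, hrange, hinj⟩
  refine ⟨fun p _ => ?_, fun p hp τ hτ0 hτ => ?_, fun p hp p' hp' hpp' τ hτ => ?_, ?_⟩
  · simp [Rq_self_zero]
  · exact sum_Rq_fpnZ_eq_zero hP hvm.le hacop hbcop h0 hp hp hτ (Or.inl (abs_pos.mp hτ0))
  · exact sum_Rq_fpnZ_eq_zero hP hvm.le hacop hbcop h0 hp hp' hτ (Or.inr hpp')
  · rw [Nat.pow_div (Nat.sub_le m v) (by omega), Nat.sub_sub_self hvm.le, ← pow_add, add_comm]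

/-- Theorem 4: the family `{F^0,…,F^{q^{v+d}-1}}` is an optimal
`(q^{v+d}, q^d, q^m, q^{m-v})`-ZCCS. -/
theorem stmt11 (q m d v b : ℕ) (hq : 2 ≤ q) (hv : 1 ≤ v) (hvm : v < m) (hd : 1 ≤ d)
    (hdmv : d ≤ m - v)
    (mα : ℕ → ℕ) (hmα : ∀ α ∈ Finset.Icc 1 d, 1 ≤ mα α)
    (hsum : ∑ α ∈ Finset.Icc 1 d, mα α = m - v)
    (π : ℕ → ℕ → ℕ)
    (hrange : ∀ α ∈ Finset.Icc 1 d, ∀ β ∈ Finset.Icc 1 (mα α), π α β ∈ Finset.Icc 1 (m - v))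
    (hinj : ∀ α ∈ Finset.Icc 1 d, ∀ β ∈ Finset.Icc 1 (mα α), ∀ α' ∈ Finset.Icc 1 d,
      ∀ β' ∈ Finset.Icc 1 (mα α'), π α β = π α' β' → α = α' ∧ β = β')
    (a : ℕ → ℕ → ℕ)
    (hacop : ∀ α ∈ Finset.Icc 1 d, ∀ β ∈ Finset.Icc 1 (mα α - 1), Nat.Coprime (a α β) q)
    (hbcop : Nat.Coprime b q)
    (h : ℕ → ℕ → ZMod q) (h0 : ZMod q) :
    (∀ p < q ^ (v + d),
      ∑ n ∈ Finset.range (q ^ d),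
        Rq q (q ^ m) (fpnZ q m d v b mα π a h h0 p n) (fpnZ q m d v b mα π a h h0 p n) 0
        = (q : ℂ) ^ d * (q : ℂ) ^ m) ∧
    (∀ p < q ^ (v + d), ∀ τ : ℤ, 0 < |τ| → |τ| < (q : ℤ) ^ (m - v) →
      ∑ n ∈ Finset.range (q ^ d),
        Rq q (q ^ m) (fpnZ q m d v b mα π a h h0 p n) (fpnZ q m d v b mα π a h h0 p n) τ
        = 0) ∧
    (∀ p < q ^ (v + d), ∀ p' < q ^ (v + d), p ≠ p' → ∀ τ : ℤ, |τ| < (q : ℤ) ^ (m - v) →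
      ∑ n ∈ Finset.range (q ^ d),
        Rq q (q ^ m) (fpnZ q m d v b mα π a h h0 p n) (fpnZ q m d v b mα π a h h0 p' n) τ
        = 0) ∧
    q ^ (v + d) = q ^ d * (q ^ m / q ^ (m - v)) :=
  stmt11_general q m d v b hq hvm mα hmα hsum π hrange hinj a hacop hbcop h h0
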